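/- arXiv:0803.1333 — 2 statements merged into one kernel-verified Lean document; each statement's English description precedes it below -/
import Mathlib

section
/- Let S be a finite symmetric subset (v ∈ S ⟹ -v ∈ S) of the unit sphere S^{n-1} ⊂ ℝ^n spanning ℝ^n. Then there exists a basis B of ℝ^n contained in S and a linear map F : ℝ^n → ℝ^n arbitrarily close to the identity such that |Fv| = |v| for v ∈ S with ±v ∈ B, and |Fv| > |v| for all other v ∈ S. -/
open Matrix Submodule Module

/-- The Euclidean norm of a vector in `ℝⁿ`. -/
noncomputable def enorm {n : ℕ} (w : Fin n → ℝ) : ℝ := Real.sqrt (∑ i, (w i) ^ 2)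

/-- The real vector associated to an integer vector. -/
def intVec {n : ℕ} (v : Fin n → ℤ) : Fin n → ℝ := fun i => (v i : ℝ)

/-- The systole (first minimum) of the lattice `Aℤⁿ`. -/
noncomputable def syst1 {n : ℕ} (A : Matrix (Fin n) (Fin n) ℝ) : ℝ :=
  sInf {r : ℝ | ∃ v : Fin n → ℤ, v ≠ 0 ∧ _root_.enorm (A.mulVec (intVec v)) = r}

/-- The `i`-th systole (Minkowski's `i`-th successive minimum) of the lattice `Aℤⁿ`. -/
noncomputable def systI {n : ℕ} (A : Matrix (Fin n) (Fin n) ℝ) (i : ℕ) : ℝ :=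
  sInf {r : ℝ | i ≤ Module.finrank ℝ (Submodule.span ℝ
    (intVec '' {v : Fin n → ℤ | _root_.enorm (A.mulVec (intVec v)) < r}))}

/-- The set of shortest (nonzero) integer vectors of `A`. -/
noncomputable def S1 {n : ℕ} (A : Matrix (Fin n) (Fin n) ℝ) : Set (Fin n → ℤ) :=
  {v | v ≠ 0 ∧ _root_.enorm (A.mulVec (intVec v)) = syst1 A}

/-- `A` is well-rounded if its shortest vectors span `ℝⁿ`. -/
noncomputable def WellRounded {n : ℕ} (A : Matrix (Fin n) (Fin n) ℝ) : Prop :=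
  Submodule.span ℝ (intVec '' S1 A) = ⊤

/-- The span of the integer vectors realized up to the `i`-th minimum. -/
noncomputable def LambdaI {n : ℕ} (A : Matrix (Fin n) (Fin n) ℝ) (i : ℕ) :
    Submodule ℝ (Fin n → ℝ) :=
  Submodule.span ℝ (intVec '' {v : Fin n → ℤ | _root_.enorm (A.mulVec (intVec v)) ≤ systI A i})

/-- The real matrix associated to an element of `SL_n(ℤ)`. -/
def SLZtoR {n : ℕ} (γ : Matrix.SpecialLinearGroup (Fin n) ℤ) : Matrix (Fin n) (Fin n) ℝ :=
  (γ : Matrix (Fin n) (Fin n) ℤ).map (Int.cast)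

/-!
Take a basis `b ⊆ S` of minimal `|det|`. By Cramer's rule, replacing `bᵢ` by `w ∈ S` multiplies
the determinant by the `i`-th coordinate of `w`, so every nonzero coordinate of `w` has absolute
value at least `1`. Hence the coordinate map `C` of `b` has `‖C w‖² ≥ 2` for the unit vectors
`w ∈ S` other than `±bᵢ`, and `‖C (±bᵢ)‖² = 1`. The positive square root `F` of
`(1 - t) + t C*C` satisfies `‖F v‖² = (1 - t) ‖v‖² + t ‖C v‖²`, and since `F + 1` is expanding,
`‖F - 1‖ ≤ ‖F² - 1‖ = t ‖C*C - 1‖`, which is small for small `t > 0`.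
-/

open ContinuousLinearMap
open scoped RealInnerProductSpace

namespace Module.Basis

variable {K V ι : Type*} [Field K] [AddCommGroup V] [Module K V] [Fintype ι] [DecidableEq ι]
  (e : Basis ι K V)

theorem exists_det_ne_zero_of_span_eq_top {S : Set V} (hS : span K S = ⊤) :
    ∃ u : ι → V, (∀ i, u i ∈ S) ∧ e.det u ≠ 0 := by
  obtain ⟨s, hsub, hspan, hli⟩ := exists_linearIndependent K S
  let B : Basis s K V := .mk hli (by rw [Subtype.range_coe, hspan, hS])
  refine ⟨B.reindex (B.indexEquiv e), fun i => ?_, (e.isUnit_det _).ne_zero⟩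
  simpa [B] using hsub (Subtype.mem _)

theorem det_update_eq_repr_mul_det (b : Basis ι K V) (w : V) (i : ι) :
    e.det (Function.update b i w) = b.repr w i * e.det b := by
  have h := congrArg (· w) (e.det_smul_mk_coord_eq_det_update b.linearIndependent b.span_eq.ge i)
  have hb : Basis.mk b.linearIndependent b.span_eq.ge = b := Basis.eq_of_apply_eq fun _ => by simp
  simpa [hb, mul_comm] using h.symm

variable [LinearOrder K]

theorem exists_basis_forall_abs_det_le {S : Finset V} (hS : span K (S : Set V) = ⊤) :
    ∃ b : Basis ι K V, (∀ i, b i ∈ S) ∧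
      ∀ u : ι → V, (∀ i, u i ∈ S) → e.det u ≠ 0 → |e.det b| ≤ |e.det u| := by
  let C : Set (ι → V) := {u | (∀ i, u i ∈ S) ∧ e.det u ≠ 0}
  have hC : C.Finite := (Set.Finite.pi fun _ => S.finite_toSet).subset fun u hu => by
    simpa using hu.1
  obtain ⟨v, ⟨hvS, hv⟩, hmin⟩ := Set.exists_min_image C (fun u => |e.det u|) hC
    (e.exists_det_ne_zero_of_span_eq_top hS)
  obtain ⟨hli, hsp⟩ := e.is_basis_iff_det.2 (isUnit_iff_ne_zero.2 hv)
  exact ⟨.mk hli hsp.ge, by simpa using hvS, by simpa using fun u hu hu0 => hmin u ⟨hu, hu0⟩⟩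

theorem one_le_abs_repr_of_forall_abs_det_le [IsStrictOrderedRing K] {S : Set V}
    {b : Basis ι K V} (hb : ∀ i, b i ∈ S)
    (hmin : ∀ u : ι → V, (∀ i, u i ∈ S) → e.det u ≠ 0 → |e.det b| ≤ |e.det u|)
    {w : V} (hw : w ∈ S) {i : ι} (hi : b.repr w i ≠ 0) : 1 ≤ |b.repr w i| := by
  have hdet : e.det b ≠ 0 := (e.isUnit_det b).ne_zero
  have hupd := e.det_update_eq_repr_mul_det b w i
  have hle := hmin (Function.update b i w)
    (fun k => by rcases eq_or_ne k i with rfl | hk <;> simp [*])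
    (by rw [hupd]; exact mul_ne_zero hi hdet)
  rw [hupd, abs_mul] at hle
  exact le_of_mul_le_mul_right (by simpa using hle) (abs_pos.2 hdet)

end Module.Basis

theorem Module.Basis.two_le_sum_sq_repr {ι E : Type*} [Fintype ι] [NormedAddCommGroup E]
    [NormedSpace ℝ E] (b : Basis ι ℝ E) (hb : ∀ i, ‖b i‖ = 1) {w : E} (hw : ‖w‖ = 1)
    (hcoord : ∀ i, b.repr w i ≠ 0 → 1 ≤ |b.repr w i|) (hne : ¬∃ i, w = b i ∨ w = -b i) :
    2 ≤ ∑ i, b.repr w i ^ 2 := by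
  obtain ⟨i, hi⟩ : (b.repr w).support.Nonempty := by
    rw [Finsupp.support_nonempty_iff, LinearEquiv.map_ne_zero_iff, ← norm_ne_zero_iff, hw]
    exact one_ne_zero
  have hcard : 1 < (b.repr w).support.card := by
    rw [Finset.one_lt_card]
    by_contra! h
    have hsingle : b.repr w = Finsupp.single i (b.repr w i) :=
      Finsupp.support_subset_singleton.1 fun j hj => Finset.mem_singleton.2 (h j hj i hi)
    have hwi : w = b.repr w i • b i := by
      rw [← b.repr_symm_single, ← hsingle, LinearEquiv.symm_apply_apply]
    have habs : |b.repr w i| = 1 := by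
      have h := congrArg (‖·‖) hwi
      rwa [_root_.norm_smul, hb, hw, mul_one, Real.norm_eq_abs, eq_comm] at h
    rcases abs_eq zero_le_one |>.1 habs with h1 | h1
    · exact hne ⟨i, .inl (by simpa [h1] using hwi)⟩
    · exact hne ⟨i, .inr (by simpa [h1] using hwi)⟩
  calc (2 : ℝ) ≤ (b.repr w).support.card := by exact_mod_cast hcard
    _ = ∑ j ∈ (b.repr w).support, 1 := by simp
    _ ≤ ∑ j ∈ (b.repr w).support, b.repr w j ^ 2 := Finset.sum_le_sum fun j hj =>
      one_le_sq_iff_one_le_abs _ |>.2 (hcoord j (Finsupp.mem_support_iff.1 hj))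
    _ ≤ ∑ j, b.repr w j ^ 2 :=
      Finset.sum_le_sum_of_subset_of_nonneg (Finset.subset_univ _) fun _ _ _ => sq_nonneg _

open scoped MatrixOrder in
theorem EuclideanSpace.exists_isPositive_mul_self_eq {ι : Type*} [Fintype ι]
    [DecidableEq ι] {P : EuclideanSpace ℝ ι →L[ℝ] EuclideanSpace ℝ ι} (hP : P.IsPositive) :
    ∃ F : EuclideanSpace ℝ ι →L[ℝ] EuclideanSpace ℝ ι, F.IsPositive ∧ F * F = P := by
  have hpos (A : Matrix ι ι ℝ) : (Matrix.toEuclideanCLM (𝕜 := ℝ) A).IsPositive ↔ 0 ≤ A :=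
    (LinearMap.isPositive_toContinuousLinearMap_iff _).trans
      (Matrix.isPositive_toEuclideanLin_iff.trans Matrix.nonneg_iff_posSemidef.symm)
  obtain ⟨A, rfl⟩ : ∃ A, Matrix.toEuclideanCLM (𝕜 := ℝ) A = P :=
    Matrix.toEuclideanCLM.surjective P
  refine ⟨Matrix.toEuclideanCLM (𝕜 := ℝ) (CFC.sqrt A), (hpos _).2 (CFC.sqrt_nonneg A), ?_⟩
  rw [← map_mul, CFC.sqrt_mul_sqrt_self A ((hpos A).1 hP)]

theorem ContinuousLinearMap.norm_sub_one_le_norm_mul_self_sub_one {E : Type*}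
    [NormedAddCommGroup E] [InnerProductSpace ℝ E] [FiniteDimensional ℝ E] (F : E →L[ℝ] E)
    (hF : ∀ x, 0 ≤ ⟪F x, x⟫) : ‖F - 1‖ ≤ ‖F * F - 1‖ := by
  have hlow : ∀ w, ‖w‖ ≤ ‖(F + 1) w‖ := by
    intro w
    rcases (norm_nonneg w).eq_or_lt with hw | hw
    · rw [← hw]; exact norm_nonneg _
    refine le_of_mul_le_mul_right ?_ hw
    calc ‖w‖ * ‖w‖ = ⟪w, w⟫ := (real_inner_self_eq_norm_mul_norm w).symm
      _ ≤ ⟪(F + 1) w, w⟫ := by simp [inner_add_left, hF w]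
      _ ≤ ‖(F + 1) w‖ * ‖w‖ := real_inner_le_norm _ _
  have hsurj : Function.Surjective ⇑(F + 1) :=
    LinearMap.injective_iff_surjective.mp fun a b hab => by
      have := hlow (a - b)
      rw [map_sub, show (F + 1) a = (F + 1) b from hab, sub_self, norm_zero] at this
      exact sub_eq_zero.mp (norm_le_zero_iff.mp this)
  refine opNorm_le_bound _ (norm_nonneg _) fun v => ?_
  obtain ⟨w, rfl⟩ := hsurj v
  rw [← mul_apply_eq_comp, show (F - 1) * (F + 1) = F * F - 1 by noncomm_ring]
  exact ((F * F - 1).le_opNorm w).trans (by gcongr; exact hlow w)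

theorem EuclideanSpace.exists_norm_sub_one_le_and_norm_sq_eq {ι F : Type*} [Fintype ι]
    [DecidableEq ι] [NormedAddCommGroup F] [InnerProductSpace ℝ F] [CompleteSpace F]
    (C : EuclideanSpace ℝ ι →L[ℝ] F) {t : ℝ} (ht₀ : 0 ≤ t) (ht₁ : t ≤ 1) :
    ∃ G : EuclideanSpace ℝ ι →L[ℝ] EuclideanSpace ℝ ι, ‖G - 1‖ ≤ t * ‖adjoint C ∘L C - 1‖ ∧
      ∀ v, ‖G v‖ ^ 2 = (1 - t) * ‖v‖ ^ 2 + t * ‖C v‖ ^ 2 := by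
  set P : EuclideanSpace ℝ ι →L[ℝ] EuclideanSpace ℝ ι := (1 - t) • 1 + t • (adjoint C ∘L C)
  have hP : P.IsPositive := (isPositive_one.smul_of_nonneg (by linarith)).add
    ((isPositive_adjoint_comp_self C).smul_of_nonneg ht₀)
  obtain ⟨G, hG, hGG⟩ := EuclideanSpace.exists_isPositive_mul_self_eq hP
  refine ⟨G, ?_, fun v => ?_⟩
  · calc ‖G - 1‖ ≤ ‖G * G - 1‖ := G.norm_sub_one_le_norm_mul_self_sub_one hG.inner_nonneg_left
      _ = ‖t • (adjoint C ∘L C - 1)‖ := by rw [hGG]; congr 1; module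
      _ = t * ‖adjoint C ∘L C - 1‖ := by rw [norm_smul, Real.norm_of_nonneg ht₀]
  · calc ‖G v‖ ^ 2 = ⟪(G * G) v, v⟫ := by
          rw [← real_inner_self_eq_norm_sq, mul_apply_eq_comp]
          exact (hG.isSelfAdjoint.isSymmetric _ _).symm
      _ = (1 - t) * ‖v‖ ^ 2 + t * ‖C v‖ ^ 2 := by
          simp [hGG, P, inner_add_left, inner_smul_left, adjoint_inner_left]

theorem Module.Basis.exists_basis_two_le_sum_sq_repr {ι E : Type*} [Fintype ι] [DecidableEq ι]
    [NormedAddCommGroup E] [NormedSpace ℝ E] (e : Basis ι ℝ E) {S : Finset E}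
    (hS : ∀ v ∈ S, ‖v‖ = 1) (hspan : span ℝ (S : Set E) = ⊤) :
    ∃ b : Basis ι ℝ E, (∀ i, b i ∈ S) ∧
      ∀ w ∈ S, (¬∃ i, w = b i ∨ w = -b i) → 2 ≤ ∑ i, b.repr w i ^ 2 := by
  obtain ⟨b, hbS, hmin⟩ := e.exists_basis_forall_abs_det_le hspan
  exact ⟨b, hbS, fun w hw hne => b.two_le_sum_sq_repr (fun i => hS _ (hbS i)) (hS w hw)
    (fun _ => e.one_le_abs_repr_of_forall_abs_det_le hbS hmin hw) hne⟩

theorem stmt10_general (n : ℕ) (S : Finset (EuclideanSpace ℝ (Fin n)))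
    (hsphere : ∀ v ∈ S, ‖v‖ = 1)
    (hspan : Submodule.span ℝ (S : Set (EuclideanSpace ℝ (Fin n))) = ⊤) :
    ∀ ε > (0 : ℝ), ∃ (b : Basis (Fin n) ℝ (EuclideanSpace ℝ (Fin n)))
      (F : EuclideanSpace ℝ (Fin n) →L[ℝ] EuclideanSpace ℝ (Fin n)),
        (∀ i, b i ∈ S) ∧
        ‖F - ContinuousLinearMap.id ℝ (EuclideanSpace ℝ (Fin n))‖ < ε ∧
        ∀ v ∈ S,
          ((∃ i, v = b i ∨ v = -(b i)) → ‖F v‖ = ‖v‖) ∧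
          (¬(∃ i, v = b i ∨ v = -(b i)) → ‖F v‖ > ‖v‖) := by
  intro ε hε
  obtain ⟨b, hbS, hsum⟩ :=
    (EuclideanSpace.basisFun (Fin n) ℝ).toBasis.exists_basis_two_le_sum_sq_repr hsphere hspan
  let C := (EuclideanSpace.equiv (Fin n) ℝ).symm.toContinuousLinearMap ∘L
    b.equivFunL.toContinuousLinearMap
  have hC (v) : ‖C v‖ ^ 2 = ∑ i, b.repr v i ^ 2 := by simp [C, EuclideanSpace.norm_sq_eq]
  set N := ‖adjoint C ∘L C - 1‖
  set t := ε / (ε + N)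
  have ht : 0 < t := by positivity
  obtain ⟨F, hF1, hF⟩ := EuclideanSpace.exists_norm_sub_one_le_and_norm_sq_eq C ht.le
    (div_le_one_of_le₀ (by linarith [norm_nonneg (adjoint C ∘L C - 1)]) (by positivity))
  refine ⟨b, F, hbS, hF1.trans_lt ?_, fun v hv => ⟨?_, fun hne => ?_⟩⟩
  · rw [div_mul_eq_mul_div, div_lt_iff₀ (by positivity)]
    nlinarith
  · rintro ⟨i, rfl | rfl⟩ <;>
    · refine (sq_eq_sq₀ (norm_nonneg _) (norm_nonneg _)).1 ?_
      simp [hF, hC, hsphere _ (hbS i), Finsupp.single_apply]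
  · refine (pow_lt_pow_iff_left₀ (norm_nonneg _) (norm_nonneg _) two_ne_zero).1 ?_
    rw [hF, hC, hsphere v hv]
    nlinarith [hsum v hv hne]

/-- for a finite symmetric spanning subset `S` of the unit sphere, there
is a basis `B ⊆ S` and a linear map `F` arbitrarily close to the identity preserving
the norms of `±B` and strictly increasing the norms of all other elements of `S`. -/
theorem stmt10 (n : ℕ) (S : Finset (EuclideanSpace ℝ (Fin n)))
    (hsphere : ∀ v ∈ S, ‖v‖ = 1)
    (hsymm : ∀ v ∈ S, -v ∈ S)
    (hspan : Submodule.span ℝ (S : Set (EuclideanSpace ℝ (Fin n))) = ⊤) :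
    ∀ ε > (0 : ℝ), ∃ (b : Basis (Fin n) ℝ (EuclideanSpace ℝ (Fin n)))
      (F : EuclideanSpace ℝ (Fin n) →L[ℝ] EuclideanSpace ℝ (Fin n)),
        (∀ i, b i ∈ S) ∧
        ‖F - ContinuousLinearMap.id ℝ (EuclideanSpace ℝ (Fin n))‖ < ε ∧
        ∀ v ∈ S,
          ((∃ i, v = b i ∨ v = -(b i)) → ‖F v‖ = ‖v‖) ∧
          (¬(∃ i, v = b i ∨ v = -(b i)) → ‖F v‖ > ‖v‖) :=
  stmt10_general n S hsphere hspan
end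

section
/- The set of well-rounded points A ∈ SL_n(ℝ) such that the set of shortest vectors S₁(A) equals {±v₁,...,±v_n} for some linearly independent v₁,...,v_n ∈ ℤ^n (i.e., A has exactly 2n shortest vectors forming a symmetric basis) is dense in the set X of all well-rounded elements. -/
open Matrix Submodule Module

/-!
Let `A` be well-rounded with systole `m`. Among the bases `v₁, …, vₙ` of `ℝⁿ` made of shortest
vectors of `A` pick one minimising `|det|`. Then each shortest vector `w` is some `±vᵢ` or has at
least two nonzero coordinates in this basis, each of absolute value `≥ 1`; thus `|Ww|² ≥ 2`, where
`W` is the inverse of the basis matrix. The quadratic form `(1 - t)|Ax|² + t m²|Wx|²` equals `m²`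
at the `±vᵢ`, is at least `(1 + t)m²` at the other shortest vectors, and, as the systole is
isolated, exceeds `m²` at all remaining nonzero lattice vectors once `t` is small. It is
`|Bₜx|²` for `Bₜ = √(1 + tM) A → A`, with `M` symmetric, and rescaling `Bₜ` to determinant one
gives well-rounded matrices with exactly the `2n` shortest vectors `±vᵢ` converging to `A`.
-/

open Filter Topology

namespace Systole

section MinimalDeterminant

variable {ι : Type*} [Fintype ι] [DecidableEq ι]

lemma det_updateCol_eq_det_mul_inv_mulVec {K : Type*} [Field K] {V : Matrix ι ι K}
    (hV : IsUnit V) (x : ι → K) (i : ι) :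
    (V.updateCol i x).det = V.det * (V⁻¹ *ᵥ x) i := by
  have hdet : V.det ≠ 0 := ((isUnit_iff_isUnit_det V).mp hV).ne_zero
  rw [← cramer_apply, cramer_eq_adjugate_mulVec, inv_def, Ring.inverse_eq_inv', smul_mulVec,
    Pi.smul_apply, smul_eq_mul, mul_inv_cancel_left₀ hdet]

lemma exists_isUnit_of_span_eq_top {K : Type*} [Field K] {s : Set (ι → K)}
    (hs : span K s = ⊤) : ∃ u : ι → ι → K, (∀ i, u i ∈ s) ∧ IsUnit (of u)ᵀ := by
  let b₀ := Basis.ofSpan hs.ge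
  let b := b₀.reindex (b₀.indexEquiv (Pi.basisFun K ι))
  refine ⟨b, fun i => Basis.ofSpan_subset hs.ge ?_, ?_⟩
  · rw [← Basis.range_reindex _ (b₀.indexEquiv (Pi.basisFun K ι))]
    exact ⟨i, rfl⟩
  · exact linearIndependent_cols_iff_isUnit.mp b.linearIndependent

lemma exists_one_le_abs_inv_mulVec {s : Set (ι → ℝ)} (hs : s.Finite) (hspan : span ℝ s = ⊤) :
    ∃ u : ι → ι → ℝ, (∀ i, u i ∈ s) ∧ IsUnit (of u)ᵀ ∧
      ∀ x ∈ s, ∀ i, ((of u)ᵀ⁻¹ *ᵥ x) i ≠ 0 → 1 ≤ |((of u)ᵀ⁻¹ *ᵥ x) i| := by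
  set P := {u : ι → ι → ℝ | (∀ i, u i ∈ s) ∧ IsUnit (of u)ᵀ}
  have hP : P.Finite := (Set.Finite.pi fun _ => hs).subset fun u hu i _ => hu.1 i
  obtain ⟨u, ⟨hus, hu⟩, hmin⟩ :=
    Set.exists_min_image P (fun u => |(of u)ᵀ.det|) hP (exists_isUnit_of_span_eq_top hspan)
  refine ⟨u, hus, hu, fun x hx i hci => ?_⟩
  -- Replacing `u i` by `x` multiplies the determinant by the `i`-th coordinate of `x` (Cramer).
  have hdet : (of (Function.update u i x))ᵀ.det = (of u)ᵀ.det * ((of u)ᵀ⁻¹ *ᵥ x) i := by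
    rw [← det_updateCol_eq_det_mul_inv_mulVec hu, updateCol_transpose]
    rfl
  have hdet0 : (of u)ᵀ.det ≠ 0 := ((isUnit_iff_isUnit_det _).mp hu).ne_zero
  have hupd : Function.update u i x ∈ P := by
    refine ⟨fun j => ?_, (isUnit_iff_isUnit_det _).mpr ?_⟩
    · rcases eq_or_ne j i with rfl | hj
      · simpa using hx
      · simpa [hj] using hus j
    · rw [hdet]
      exact (mul_ne_zero hdet0 hci).isUnit
  have := hmin _ hupd
  rw [hdet, abs_mul] at this
  exact (le_mul_iff_one_le_right (abs_pos.mpr hdet0)).mp this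

lemma exists_eq_single_or_two_le_sum_sq {c : ι → ℝ} (hc : c ≠ 0)
    (h : ∀ i, c i ≠ 0 → 1 ≤ |c i|) : (∃ i, c = Pi.single i (c i)) ∨ 2 ≤ ∑ i, c i ^ 2 := by
  obtain ⟨i, hi⟩ := Function.ne_iff.mp hc
  by_cases hsingle : ∀ j, j ≠ i → c j = 0
  · refine Or.inl ⟨i, funext fun j => ?_⟩
    rcases eq_or_ne j i with rfl | hj
    · simp
    · simp [hj, hsingle j hj]
  · push Not at hsingle
    obtain ⟨j, hji, hj⟩ := hsingle
    have hsq : ∀ k, c k ≠ 0 → 1 ≤ c k ^ 2 := fun k hk =>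
      (one_le_sq_iff_one_le_abs _).mpr (h k hk)
    right
    calc (2 : ℝ) ≤ c i ^ 2 + c j ^ 2 := by linarith [hsq i hi, hsq j hj]
      _ = ∑ k ∈ {i, j}, c k ^ 2 := (Finset.sum_pair (f := fun k => c k ^ 2) hji.symm).symm
      _ ≤ ∑ k, c k ^ 2 :=
        Finset.sum_le_sum_of_subset_of_nonneg (Finset.subset_univ _) fun k _ _ => sq_nonneg _

end MinimalDeterminant

section SquareRootPath

variable {ι 𝕜 : Type*} [Fintype ι] [DecidableEq ι] [RCLike 𝕜]

lemma eventually_cfc_sqrt_mul_self {M : Matrix ι ι 𝕜} (hM : M.IsHermitian) :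
    ∀ᶠ t in 𝓝 (0 : ℝ), cfc (fun x => √(1 + t * x)) M * cfc (fun x => √(1 + t * x)) M
      = 1 + t • M := by
  have hpos : ∀ᶠ t in 𝓝 (0 : ℝ), ∀ x ∈ spectrum ℝ M, 0 < 1 + t * x := by
    refine (Set.toFinite _).eventually_all.mpr fun x _ => ?_
    exact continuousAt_const.eventually_lt (f := fun _ => (0:ℝ)) (by fun_prop) (by simp)
  filter_upwards [hpos] with t ht
  rw [← cfc_mul .., cfc_congr (g := fun x => 1 + t * x) fun x hx => Real.mul_self_sqrt (ht x hx).le,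
    cfc_add .., cfc_const_one ℝ M hM.isSelfAdjoint, cfc_const_mul_id ..]

lemma cfc_sqrt_zero {M : Matrix ι ι 𝕜} (hM : M.IsHermitian) :
    cfc (fun x => √(1 + (0:ℝ) * x)) M = 1 := by
  simpa using cfc_const_one ℝ M hM.isSelfAdjoint

lemma exists_continuous_gram_path {A : Matrix ι ι 𝕜} (hA : IsUnit A) {P : Matrix ι ι 𝕜}
    (hP : P.IsHermitian) :
    ∃ B : ℝ → Matrix ι ι 𝕜, Continuous B ∧ B 0 = A ∧
      ∀ᶠ t in 𝓝 0, (B t)ᴴ * B t = Aᴴ * A + t • P := by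
  set M := (A⁻¹)ᴴ * P * A⁻¹
  have hM : M.IsHermitian := isHermitian_conjTranspose_mul_mul _ hP
  set N : ℝ → Matrix ι ι 𝕜 := fun t => cfc (fun x => √(1 + t * x)) M
  refine ⟨fun t => N t * A, ?_, by simp [N, cfc_sqrt_zero hM], ?_⟩
  · refine Continuous.mul ?_ continuous_const
    simp only [hM.cfc_eq, IsHermitian.cfc, Unitary.conjStarAlgAut_apply]
    fun_prop
  · filter_upwards [eventually_cfc_sqrt_mul_self hM] with t ht
    have hN : (N t)ᴴ = N t := (cfc_predicate (fun x => √(1 + t * x)) M : IsSelfAdjoint _)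
    have hMA : Aᴴ * M * A = P := by
      have hAinv : A⁻¹ * A = 1 := nonsing_inv_mul A ((isUnit_iff_isUnit_det A).mp hA)
      calc Aᴴ * M * A = (A⁻¹ * A)ᴴ * P * (A⁻¹ * A) := by
            simp only [M, conjTranspose_mul, Matrix.mul_assoc]
        _ = P := by rw [hAinv]; simp
    calc (N t * A)ᴴ * (N t * A) = Aᴴ * (N t * N t) * A := by
          rw [conjTranspose_mul, hN]; simp only [Matrix.mul_assoc]
      _ = Aᴴ * A + t • P := by
          rw [ht, Matrix.mul_add, Matrix.add_mul, Matrix.mul_smul, Matrix.smul_mul, hMA,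
            Matrix.mul_one]

end SquareRootPath

variable {n : ℕ} {A B : Matrix (Fin n) (Fin n) ℝ}

lemma enorm_eq_norm (w : Fin n → ℝ) : _root_.enorm w = ‖WithLp.toLp 2 w‖ := by
  simp [_root_.enorm, EuclideanSpace.norm_eq]

lemma enorm_nonneg (w : Fin n → ℝ) : 0 ≤ _root_.enorm w := Real.sqrt_nonneg _

lemma enorm_pos {w : Fin n → ℝ} (hw : w ≠ 0) : 0 < _root_.enorm w := by
  simpa [enorm_eq_norm] using hw

lemma enorm_neg (w : Fin n → ℝ) : _root_.enorm (-w) = _root_.enorm w := by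
  simp [enorm_eq_norm]

lemma enorm_smul (c : ℝ) (w : Fin n → ℝ) : _root_.enorm (c • w) = |c| * _root_.enorm w := by
  simp [enorm_eq_norm, norm_smul]

lemma abs_le_enorm (w : Fin n → ℝ) (i : Fin n) : |w i| ≤ _root_.enorm w := by
  simpa [enorm_eq_norm] using PiLp.norm_apply_le (WithLp.toLp 2 w) i

lemma enorm_sq (w : Fin n → ℝ) : _root_.enorm w ^ 2 = ∑ i, w i ^ 2 :=
  Real.sq_sqrt (Finset.sum_nonneg fun _ _ => sq_nonneg _)

lemma enorm_single (i : Fin n) : _root_.enorm (Pi.single i (1 : ℝ)) = 1 := by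
  simp [enorm_eq_norm]

lemma enorm_mulVec_sq (B : Matrix (Fin n) (Fin n) ℝ) (x : Fin n → ℝ) :
    _root_.enorm (B *ᵥ x) ^ 2 = x ⬝ᵥ ((Bᵀ * B) *ᵥ x) := by
  rw [enorm_sq, ← mulVec_mulVec, dotProduct_mulVec x Bᵀ, vecMul_transpose]
  simp [dotProduct, sq]

lemma intVec_injective : Function.Injective (intVec (n := n)) :=
  fun _ _ h => funext fun i => by simpa [intVec] using congrFun h i

lemma intVec_neg (v : Fin n → ℤ) : intVec (-v) = -intVec v := by
  ext i; simp [intVec]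

lemma intVec_ne_zero {v : Fin n → ℤ} (hv : v ≠ 0) : intVec v ≠ 0 :=
  fun h => hv (intVec_injective (h.trans (by ext; simp [intVec])))

lemma enorm_mulVec_intVec_neg (A : Matrix (Fin n) (Fin n) ℝ) (v : Fin n → ℤ) :
    _root_.enorm (A *ᵥ intVec (-v)) = _root_.enorm (A *ᵥ intVec v) := by
  rw [intVec_neg, mulVec_neg, enorm_neg]

lemma enorm_mulVec_intVec_pos (hA : IsUnit A) {v : Fin n → ℤ} (hv : v ≠ 0) :
    0 < _root_.enorm (A *ᵥ intVec v) :=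
  enorm_pos fun h => intVec_ne_zero hv <|
    mulVec_injective_iff_isUnit.mpr hA (h.trans (mulVec_zero A).symm)

lemma norm_le_enorm (w : Fin n → ℝ) : ‖w‖ ≤ _root_.enorm w :=
  (pi_norm_le_iff_of_nonneg (enorm_nonneg w)).mpr fun i =>
    (Real.norm_eq_abs _).trans_le (abs_le_enorm w i)

open scoped Matrix.Norms.Operator in
lemma finite_setOf_enorm_mulVec_le (hA : IsUnit A) (R : ℝ) :
    {v : Fin n → ℤ | _root_.enorm (A *ᵥ intVec v) ≤ R}.Finite := by
  set N : ℤ := ⌈‖A⁻¹‖ * R⌉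
  refine (Set.finite_Icc (fun _ => -N) fun _ => N).subset fun v hv => ?_
  have hbound : ∀ i, |(v i : ℝ)| ≤ N := fun i => calc
    |(v i : ℝ)| ≤ ‖intVec v‖ := by rw [← Real.norm_eq_abs]; exact norm_le_pi_norm (intVec v) i
    _ = ‖A⁻¹ *ᵥ (A *ᵥ intVec v)‖ := by
      rw [mulVec_mulVec, nonsing_inv_mul A ((isUnit_iff_isUnit_det A).mp hA), one_mulVec]
    _ ≤ ‖A⁻¹‖ * _root_.enorm (A *ᵥ intVec v) :=
      (linfty_opNorm_mulVec _ _).trans (by gcongr; exact norm_le_enorm _)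
    _ ≤ N := (mul_le_mul_of_nonneg_left hv (norm_nonneg _)).trans (Int.le_ceil _)
  exact ⟨fun i => by exact_mod_cast (abs_le.mp (hbound i)).1,
    fun i => by exact_mod_cast (abs_le.mp (hbound i)).2⟩

lemma syst1_le {v : Fin n → ℤ} (hv : v ≠ 0) : syst1 A ≤ _root_.enorm (A *ᵥ intVec v) :=
  csInf_le ⟨0, by rintro r ⟨w, -, rfl⟩; exact enorm_nonneg _⟩ ⟨v, hv, rfl⟩

lemma exists_syst1_lt_forall_le (hA : IsUnit A) :
    ∃ s, syst1 A < s ∧ ∀ v, v ≠ 0 → v ∉ S1 A → s ≤ _root_.enorm (A *ᵥ intVec v) := by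
  set m := syst1 A
  set T := {v : Fin n → ℤ | v ≠ 0 ∧ v ∉ S1 A ∧ _root_.enorm (A *ᵥ intVec v) ≤ m + 1}
  have hT : T.Finite := (finite_setOf_enorm_mulVec_le hA (m + 1)).subset fun v hv => hv.2.2
  have hTm : ∀ v ∈ T, m < _root_.enorm (A *ᵥ intVec v) := fun v hv =>
    (syst1_le hv.1).lt_of_ne fun h => hv.2.1 ⟨hv.1, h.symm⟩
  have : ∀ᶠ s in 𝓝 m, s < m + 1 ∧ ∀ v ∈ T, s < _root_.enorm (A *ᵥ intVec v) :=
    (eventually_lt_nhds (lt_add_one m)).and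
      (hT.eventually_all.mpr fun v hv => eventually_lt_nhds (hTm v hv))
  obtain ⟨s, ⟨hs1, hsT⟩, hms⟩ :=
    ((this.filter_mono (nhdsWithin_le_nhds (s := Set.Ioi m))).and self_mem_nhdsWithin).exists
  refine ⟨s, hms, fun v hv0 hvS => ?_⟩
  by_cases hv : _root_.enorm (A *ᵥ intVec v) ≤ m + 1
  · exact (hsT v ⟨hv0, hvS, hv⟩).le
  · exact hs1.le.trans (not_le.mp hv).le

lemma S1_eq_of_forall_lt [Nonempty (Fin n)] {v : Fin n → Fin n → ℤ} {m : ℝ}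
    (hv0 : ∀ i, v i ≠ 0) (hv : ∀ i, _root_.enorm (B *ᵥ intVec (v i)) = m)
    (hlt : ∀ w, w ≠ 0 → (∀ i, w ≠ v i ∧ w ≠ -v i) → m < _root_.enorm (B *ᵥ intVec w)) :
    S1 B = {w | ∃ i, w = v i ∨ w = -v i} := by
  have hmem : ∀ w, (∃ i, w = v i ∨ w = -v i) → w ≠ 0 ∧ _root_.enorm (B *ᵥ intVec w) = m := by
    rintro w ⟨i, rfl | rfl⟩
    · exact ⟨hv0 i, hv i⟩
    · exact ⟨neg_ne_zero.mpr (hv0 i), (enorm_mulVec_intVec_neg B _).trans (hv i)⟩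
  have hsyst : syst1 B = m := by
    refine IsLeast.csInf_eq ⟨⟨v (Classical.arbitrary _), hv0 _, hv _⟩, ?_⟩
    rintro r ⟨w, hw0, rfl⟩
    by_cases hw : ∃ i, w = v i ∨ w = -v i
    · exact (hmem w hw).2.ge
    · simp only [not_exists, not_or] at hw
      exact (hlt w hw0 hw).le
  ext w
  refine ⟨fun ⟨hw0, hw⟩ => ?_, fun hw => ?_⟩
  · by_contra hne
    simp only [Set.mem_ofPred_eq, not_exists, not_or] at hne
    exact (hlt w hw0 fun i => hne i).ne' (hw.trans hsyst)
  · exact ⟨(hmem w hw).1, (hmem w hw).2.trans hsyst.symm⟩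

lemma wellRounded_of_S1_eq {v : Fin n → Fin n → ℤ}
    (hli : LinearIndependent ℝ fun i => intVec (v i)) (hS : S1 B = {w | ∃ i, w = v i ∨ w = -v i}) :
    WellRounded B := by
  refine eq_top_iff.mpr ((hli.span_eq_top_of_card_eq_finrank' (by simp)).symm.le.trans
    (span_mono ?_))
  rintro _ ⟨i, rfl⟩
  exact ⟨v i, hS ▸ ⟨i, Or.inl rfl⟩, rfl⟩

open scoped Pointwise in
lemma syst1_smul {c : ℝ} (hc : 0 < c) : syst1 (c • A) = c * syst1 A := by
  have : {r | ∃ v : Fin n → ℤ, v ≠ 0 ∧ _root_.enorm ((c • A) *ᵥ intVec v) = r} =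
      c • {r | ∃ v : Fin n → ℤ, v ≠ 0 ∧ _root_.enorm (A *ᵥ intVec v) = r} := by
    ext r
    simp [smul_mulVec, enorm_smul, abs_of_pos hc, Set.mem_smul_set]
  rw [syst1, this, Real.sInf_smul_of_nonneg hc.le]
  rfl

lemma S1_smul {c : ℝ} (hc : 0 < c) : S1 (c • A) = S1 A := by
  ext w
  simp only [S1, Set.mem_ofPred_eq, smul_mulVec, enorm_smul, abs_of_pos hc, syst1_smul hc,
    mul_right_inj' hc.ne']

lemma wellRounded_smul {c : ℝ} (hc : 0 < c) : WellRounded (c • A) ↔ WellRounded A := by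
  rw [WellRounded, WellRounded, S1_smul hc]

lemma exists_S1_basis (hA : IsUnit A) (hWR : WellRounded A) :
    ∃ v : Fin n → Fin n → ℤ, LinearIndependent ℝ (fun i => intVec (v i)) ∧ (∀ i, v i ∈ S1 A) ∧
      ∃ W : Matrix (Fin n) (Fin n) ℝ, (∀ i, W *ᵥ intVec (v i) = Pi.single i 1) ∧
        ∀ w ∈ S1 A, (∃ i, w = v i ∨ w = -v i) ∨ 2 ≤ _root_.enorm (W *ᵥ intVec w) ^ 2 := by
  have hS : (S1 A).Finite :=
    (finite_setOf_enorm_mulVec_le hA (syst1 A)).subset fun v hv => hv.2.le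
  obtain ⟨u, hu, hV, hcoord⟩ := exists_one_le_abs_inv_mulVec (hS.image intVec) hWR
  choose v hvS hvu using hu
  set V := (of u)ᵀ
  have hVinv : V⁻¹ * V = 1 := nonsing_inv_mul V ((isUnit_iff_isUnit_det V).mp hV)
  have hVsingle : ∀ i (a : ℝ), V *ᵥ Pi.single i a = a • intVec (v i) := fun i a => by
    ext k; simp [V, mulVec_single, hvu, mul_comm]
  have hWv : ∀ i, V⁻¹ *ᵥ intVec (v i) = Pi.single i 1 := fun i => by
    rw [← one_smul ℝ (intVec (v i)), ← hVsingle, mulVec_mulVec, hVinv, one_mulVec]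
  have hli : LinearIndependent ℝ (fun i => intVec (v i)) := by
    simpa [V, hvu] using linearIndependent_cols_iff_isUnit.mpr hV
  refine ⟨v, hli, hvS, V⁻¹, hWv, fun w hw => ?_⟩
  set c := V⁻¹ *ᵥ intVec w
  have hVc : V *ᵥ c = intVec w := by
    rw [mulVec_mulVec, mul_nonsing_inv V ((isUnit_iff_isUnit_det V).mp hV), one_mulVec]
  have hc : c ≠ 0 := fun h => intVec_ne_zero hw.1 (by rw [← hVc, h, mulVec_zero])
  rcases exists_eq_single_or_two_le_sum_sq hc (hcoord _ ⟨w, hw, rfl⟩) with ⟨i, hci⟩ | h2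
  · left
    have hw_eq : intVec w = c i • intVec (v i) := by rw [← hVc, hci, hVsingle, Pi.single_eq_same]
    have habs : |c i| = 1 := by
      have h := hw.2
      rw [hw_eq, mulVec_smul, enorm_smul, ← (hvS i).2] at h
      exact (mul_eq_right₀ (enorm_mulVec_intVec_pos hA (hvS i).1).ne').mp h
    refine ⟨i, (abs_eq zero_le_one).mp habs |>.imp (fun h1 => ?_) fun h1 => ?_⟩
    · exact intVec_injective (by rw [hw_eq, h1, one_smul])
    · exact intVec_injective (by rw [hw_eq, h1, intVec_neg, neg_one_smul])
  · right
    rwa [enorm_sq]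

lemma exists_path_enorm_sq (hA : IsUnit A) (C : Matrix (Fin n) (Fin n) ℝ) :
    ∃ B : ℝ → Matrix (Fin n) (Fin n) ℝ, Continuous B ∧ B 0 = A ∧ ∀ᶠ t in 𝓝 0, ∀ x,
      _root_.enorm (B t *ᵥ x) ^ 2 =
        (1 - t) * _root_.enorm (A *ᵥ x) ^ 2 + t * _root_.enorm (C *ᵥ x) ^ 2 := by
  obtain ⟨B, hB, hB0, hgram⟩ := exists_continuous_gram_path hA
    ((isHermitian_conjTranspose_mul_self C).sub (isHermitian_conjTranspose_mul_self A))
  refine ⟨B, hB, hB0, hgram.mono fun t ht x => ?_⟩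
  simp only [enorm_mulVec_sq, ← conjTranspose_eq_transpose_of_trivial, ht, add_mulVec,
    smul_mulVec, sub_mulVec, dotProduct_add, dotProduct_smul, dotProduct_sub, smul_eq_mul]
  ring

lemma exists_path_S1_eq (hn : 0 < n) (hA : IsUnit A) (hWR : WellRounded A) :
    ∃ v : Fin n → Fin n → ℤ, LinearIndependent ℝ (fun i => intVec (v i)) ∧
      ∃ B : ℝ → Matrix (Fin n) (Fin n) ℝ, Continuous B ∧ B 0 = A ∧
        ∀ᶠ t in 𝓝[>] 0, S1 (B t) = {w | ∃ i, w = v i ∨ w = -v i} := by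
  have : Nonempty (Fin n) := ⟨⟨0, hn⟩⟩
  obtain ⟨v, hli, hvS, W, hWv, hS1⟩ := exists_S1_basis hA hWR
  set m := syst1 A
  have hm : 0 < m := (enorm_mulVec_intVec_pos hA (hvS ⟨0, hn⟩).1).trans_eq (hvS _).2
  obtain ⟨s, hms, hs⟩ := exists_syst1_lt_forall_le hA
  obtain ⟨B, hB, hB0, hBq⟩ := exists_path_enorm_sq hA (m • W)
  refine ⟨v, hli, B, hB, hB0, ?_⟩
  have hsmall : ∀ᶠ t in 𝓝 (0 : ℝ), m ^ 2 < (1 - t) * s ^ 2 :=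
    continuousAt_const.eventually_lt (by fun_prop)
      (by simpa using pow_lt_pow_left₀ hms hm.le two_ne_zero)
  filter_upwards [self_mem_nhdsWithin, nhdsWithin_le_nhds (hBq.and hsmall)]
    with t (ht : 0 < t) ⟨hq, hts⟩
  have hq' : ∀ x, _root_.enorm (B t *ᵥ x) ^ 2 =
      (1 - t) * _root_.enorm (A *ᵥ x) ^ 2 + t * m ^ 2 * _root_.enorm (W *ᵥ x) ^ 2 := fun x => by
    rw [hq, smul_mulVec, enorm_smul, mul_pow, sq_abs, mul_assoc]
  refine S1_eq_of_forall_lt (m := m) (fun i => (hvS i).1) (fun i => ?_) fun w hw0 hw => ?_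
  · refine (pow_left_inj₀ (enorm_nonneg _) hm.le two_ne_zero).mp ?_
    rw [hq', hWv, enorm_single, (hvS i).2]
    ring
  · refine lt_of_pow_lt_pow_left₀ 2 (enorm_nonneg _) ?_
    rw [hq']
    by_cases hwS : w ∈ S1 A
    · rcases hS1 w hwS with ⟨i, hi | hi⟩ | h2
      · exact absurd hi (hw i).1
      · exact absurd hi (hw i).2
      · rw [hwS.2]
        calc m ^ 2 < m ^ 2 + t * m ^ 2 := lt_add_of_pos_right _ (by positivity)
          _ = (1 - t) * m ^ 2 + t * m ^ 2 * 2 := by ring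
          _ ≤ _ := by gcongr
    · have h1t : 0 < 1 - t := pos_of_mul_pos_left ((pow_pos hm 2).trans hts) (sq_nonneg s)
      calc m ^ 2 < (1 - t) * s ^ 2 := hts
        _ ≤ (1 - t) * _root_.enorm (A *ᵥ intVec w) ^ 2 := by
          gcongr
          exacts [hm.le.trans hms.le, hs w hw0 hwS]
        _ ≤ _ := le_add_of_nonneg_right (by positivity)

lemma det_rpow_smul_self (hn : n ≠ 0) (hB : 0 < B.det) : (B.det ^ (-(n : ℝ)⁻¹) • B).det = 1 := by
  rw [det_smul, Fintype.card_fin, ← Real.rpow_natCast, ← Real.rpow_mul hB.le, neg_mul,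
    inv_mul_cancel₀ (Nat.cast_ne_zero.mpr hn), Real.rpow_neg_one, inv_mul_cancel₀ hB.ne']

end Systole

/-- the well-rounded elements having exactly `2n` shortest vectors
`{±v₁,…,±v_n}` forming a symmetric linearly independent set are dense in the set of
well-rounded elements of `SL_n(ℝ)`. -/
theorem stmt11 (n : ℕ) (hn : 0 < n) :
    ∀ A : {A : Matrix (Fin n) (Fin n) ℝ // A.det = 1}, WellRounded A.1 →
      A ∈ closure {A' : {A : Matrix (Fin n) (Fin n) ℝ // A.det = 1} |
        WellRounded A'.1 ∧ ∃ v : Fin n → (Fin n → ℤ),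
          LinearIndependent ℝ (fun i => intVec (v i)) ∧
          S1 A'.1 = {w | ∃ i, w = v i ∨ w = -(v i)}} := by
  rintro ⟨A, hA⟩ hWR
  obtain ⟨v, hli, B, hB, rfl, hS1⟩ := Systole.exists_path_S1_eq hn
    ((isUnit_iff_isUnit_det A).mpr (by simp [hA])) hWR
  have hdet : Tendsto (fun t => (B t).det) (𝓝[>] 0) (𝓝 1) :=
    hA ▸ (hB.matrix_det.tendsto 0).mono_left nhdsWithin_le_nhds
  have hlim : Tendsto (fun t => (B t).det ^ (-(n : ℝ)⁻¹) • B t) (𝓝[>] 0) (𝓝 (B 0)) := by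
    simpa using (hdet.rpow_const (Or.inl one_ne_zero)).smul
      ((hB.tendsto 0).mono_left nhdsWithin_le_nhds)
  rw [closure_subtype]
  refine mem_closure_of_tendsto hlim ?_
  filter_upwards [hS1, hdet.eventually (lt_mem_nhds one_pos)] with t hSt hdt
  have hc : 0 < (B t).det ^ (-(n : ℝ)⁻¹) := Real.rpow_pos_of_pos hdt _
  exact ⟨⟨_, Systole.det_rpow_smul_self hn.ne' hdt⟩,
    ⟨(Systole.wellRounded_smul hc).mpr (Systole.wellRounded_of_S1_eq hli hSt), v, hli,
      (Systole.S1_smul hc).trans hSt⟩, rfl⟩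
end
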